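/- arXiv:0805.3305 — 2 statements merged into one kernel-verified Lean document; each statement's English description precedes it below -/
import Mathlib

section
/- Let V be a finite set of n elements and U_1, ..., U_r subsets of V. Then there exists an index j such that r · (sum over i of |U_i ∩ U_j|) ≥ (sum over i of |U_i|)^2 / n. (Cauchy–Schwarz form of the intersection lemma.) -/
/-! Double count incidences: with `d v` the number of sets containing `v`, one has
`∑ i, |U i| = ∑ v, d v` and `∑ i, ∑ j, |U i ∩ U j| = ∑ v, (d v)²`, so Cauchy–Schwarz over the
`n` points of `V` gives `(∑ i, |U i|)² ≤ n ∑ j, ∑ i, |U i ∩ U j|`. An index `j` maximising the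
inner sum then carries at least a `1/r` share of the double sum. -/

open Finset

namespace Finset

variable {α ι : Type*} [DecidableEq α] [Fintype ι] {V : Finset α} {U : ι → Finset α}

lemma sum_card_eq_sum_card_filter_mem (hU : ∀ i, U i ⊆ V) :
    ∑ i, #(U i) = ∑ v ∈ V, #{i | v ∈ U i} := by
  simp_rw [card_eq_sum_ones, sum_filter]
  rw [sum_comm]
  refine sum_congr rfl fun i _ => ?_
  rw [← sum_filter, filter_mem_eq_inter, inter_eq_right.mpr (hU i)]

lemma sum_sum_card_inter_eq_sum_sq (hU : ∀ i, U i ⊆ V) :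
    ∑ j, ∑ i, #(U i ∩ U j) = ∑ v ∈ V, #{i | v ∈ U i} ^ 2 := by
  have hUU : ∀ p : ι × ι, U p.1 ∩ U p.2 ⊆ V := fun p => inter_subset_left.trans (hU p.1)
  rw [sum_comm, ← Fintype.sum_prod_type' (f := fun i j => #(U i ∩ U j)),
    sum_card_eq_sum_card_filter_mem hUU]
  refine sum_congr rfl fun v _ => ?_
  rw [sq, ← card_product, ← filter_product]
  simp only [mem_inter, univ_product_univ]

lemma sq_sum_card_le_card_mul_sum_sum_card_inter (hU : ∀ i, U i ⊆ V) :
    (∑ i, #(U i)) ^ 2 ≤ #V * ∑ j, ∑ i, #(U i ∩ U j) := by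
  rw [sum_card_eq_sum_card_filter_mem hU, sum_sum_card_inter_eq_sum_sq hU]
  exact sq_sum_le_card_mul_sum_sq

end Finset

lemma Fintype.exists_sum_le_card_nsmul {ι M : Type*} [Fintype ι] [Nonempty ι]
    [AddCommMonoid M] [LinearOrder M] [IsOrderedAddMonoid M] (f : ι → M) :
    ∃ j, ∑ i, f i ≤ Fintype.card ι • f j := by
  obtain ⟨j, hj⟩ := Finite.exists_max f
  exact ⟨j, sum_le_card_nsmul _ _ _ fun i _ => hj i⟩

theorem stmt_1_general {α : Type*} [DecidableEq α] (V : Finset α) (n : ℕ) (hV : V.card = n)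
    (r : ℕ) (hr : 1 ≤ r)
    (U : Fin r → Finset α) (hU : ∀ i, U i ⊆ V) :
    ∃ j : Fin r, (∑ i, ((U i).card : ℝ)) ^ 2 / (n : ℝ) ≤
      (r : ℝ) * ∑ i, ((U i ∩ U j).card : ℝ) := by
  have : Nonempty (Fin r) := ⟨⟨0, hr⟩⟩
  obtain ⟨j, hj⟩ := Fintype.exists_sum_le_card_nsmul fun j => ∑ i, #(U i ∩ U j)
  refine ⟨j, div_le_of_le_mul₀ n.cast_nonneg (by positivity) ?_⟩
  have key : (∑ i, #(U i)) ^ 2 ≤ r * (∑ i, #(U i ∩ U j)) * n := by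
    calc (∑ i, #(U i)) ^ 2 ≤ n * ∑ j, ∑ i, #(U i ∩ U j) :=
          hV ▸ sq_sum_card_le_card_mul_sum_sum_card_inter hU
      _ ≤ n * (r * ∑ i, #(U i ∩ U j)) := by
          simpa only [Fintype.card_fin, smul_eq_mul] using Nat.mul_le_mul_left n hj
      _ = r * (∑ i, #(U i ∩ U j)) * n := by ring
  exact_mod_cast key

theorem stmt_1 {α : Type*} [DecidableEq α] (V : Finset α) (n : ℕ) (hV : V.card = n)
    (hn : 0 < n) (r : ℕ) (hr : 1 ≤ r)
    (U : Fin r → Finset α) (hU : ∀ i, U i ⊆ V) :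
    ∃ j : Fin r, (∑ i, ((U i).card : ℝ)) ^ 2 / (n : ℝ) ≤
      (r : ℝ) * ∑ i, ((U i ∩ U j).card : ℝ) :=
  stmt_1_general V n hV r hr U hU
end

section
/- If X is a finite nonempty subset of an additive abelian group with |X + X| ≤ C·|X|, then for every positive integer k, the k-fold sumset kX = X + X + ... + X satisfies |kX| ≤ C^k · |X|. -/
open Finset Pointwise

theorem stmt_2_general {G : Type*} [AddCommGroup G] [DecidableEq G]
    (X : Finset G) (hX : X.Nonempty) (C : ℝ)
    (hXX : ((X + X).card : ℝ) ≤ C * X.card) :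
    ∀ k : ℕ, 0 < k → ((k • X).card : ℝ) ≤ C ^ k * X.card := by
  intro k _
  have plunnecke : ((k • X).card : ℝ) ≤ ((X + X).card / X.card : ℝ) ^ k * X.card := by
    have h := NNRat.cast_le (K := ℝ).2 (pluennecke_ruzsa_inequality_nsmul_add hX X k)
    push_cast at h
    exact h
  have doubling : ((X + X).card / X.card : ℝ) ≤ C :=
    (div_le_iff₀ (by exact_mod_cast hX.card_pos)).2 hXX
  exact plunnecke.trans (by gcongr)

theorem stmt_2 {G : Type*} [AddCommGroup G] [DecidableEq G]
    (X : Finset G) (hX : X.Nonempty) (C : ℝ) (hC : 1 ≤ C)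
    (hXX : ((X + X).card : ℝ) ≤ C * X.card) :
    ∀ k : ℕ, 0 < k → ((k • X).card : ℝ) ≤ C ^ k * X.card :=
  stmt_2_general X hX C hXX
end
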